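/- arXiv:1504.06461 — 2 statements merged into one kernel-verified Lean document; each statement's English description precedes it below -/
import Mathlib

section
/- Define ξ_c as in the averaged system: ξ_c(τ) = cos(α̂ + a sin τ)·cos(α*)·cos(θ̃ + a cos τ) + sin(α̂ + a sin τ)·sin(α*). At α* = 0, α̂ = 0, the average of ξ_c(τ)·sin(τ) over [0,2π] equals 0 and the average of ξ_c(τ)·cos(τ) over [0,2π] equals −(J1(√2 a)/√2)·sin(θ̃). -/
open Real intervalIntegral

/-- Bessel function of the first kind of order 1 (integral representation). -/
noncomputable def J1 (x : ℝ) : ℝ := (1 / π) * ∫ t in (0:ℝ)..π, Real.cos (t - x * Real.sin t)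

/-! Here `ξ_c(τ) = cos (a sin τ) cos (θ̃ + a cos τ)`. The sine average vanishes because the integrand
is odd, and `cos (a sin τ) cos (a cos τ) cos τ` is odd about `τ = π/2`, so only the `sin θ̃` part of
the cosine average survives. There, product-to-sum together with
`a cos τ + a sin τ = √2 a sin (τ + π/4)` and `a cos τ - a sin τ = √2 a sin (τ + 3π/4)` reduces
everything, after shifting the period, to `∫₀^{2π} sin (s sin u) sin u du = 2π J₁(s)`: this is the
integral representation of `J₁` once the part `cos (s sin u) cos u`, odd about `π/2`, is
discarded. -/

section Reflection

variable {E : Type*} [NormedAddCommGroup E] [NormedSpace ℝ E]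

theorem intervalIntegral.integral_eq_zero_of_reflect_eq_neg {f : ℝ → E} {a b : ℝ}
    (hf : ∀ x, f (a + b - x) = -f x) : ∫ x in a..b, f x = 0 := by
  have h : ∫ x in a..b, f x = -∫ x in a..b, f x :=
    calc ∫ x in a..b, f x = ∫ x in a..b, f (a + b - x) := by
          rw [integral_comp_sub_left, add_sub_cancel_right, add_sub_cancel_left]
      _ = -∫ x in a..b, f x := by simp_rw [hf, integral_neg]
  exact (smul_eq_zero_iff_right (two_ne_zero : (2:ℝ) ≠ 0)).mp
    (by rw [two_smul]; exact eq_neg_iff_add_eq_zero.mp h)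

theorem Function.Periodic.integral_eq_zero_of_reflect_eq_neg {f : ℝ → E} {T c : ℝ}
    (hper : Function.Periodic f T) (hf : ∀ x, f (c - x) = -f x) : ∫ x in 0..T, f x = 0 := by
  rw [← zero_add T, hper.intervalIntegral_add_eq 0 ((c - T) / 2)]
  have hsum : (c - T) / 2 + ((c - T) / 2 + T) = c := by ring
  exact intervalIntegral.integral_eq_zero_of_reflect_eq_neg fun x => by rw [hsum, hf]

end Reflection

theorem sqrt_two_mul_sin_add_pi_div_four (x : ℝ) : √2 * sin (x + π / 4) = cos x + sin x := by
  rw [sin_add, sin_pi_div_four, cos_pi_div_four]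
  linear_combination (sin x + cos x) / 2 * mul_self_sqrt zero_le_two

theorem sqrt_two_mul_sin_add_three_pi_div_four (x : ℝ) :
    √2 * sin (x + 3 * π / 4) = cos x - sin x := by
  rw [show 3 * π / 4 = π - π / 4 by ring, sin_add, sin_pi_sub, cos_pi_sub, sin_pi_div_four,
    cos_pi_div_four]
  linear_combination (cos x - sin x) / 2 * mul_self_sqrt zero_le_two

theorem integral_sin_mul_sin_sin_eq_pi_mul_J1 (s : ℝ) :
    ∫ t in 0..π, sin (s * sin t) * sin t = π * J1 s := by
  have hodd : ∫ t in 0..π, cos (s * sin t) * cos t = 0 :=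
    integral_eq_zero_of_reflect_eq_neg fun t => by
      rw [zero_add, sin_pi_sub, cos_pi_sub, mul_neg]
  have hsplit : ∫ t in 0..π, cos (t - s * sin t)
      = (∫ t in 0..π, cos (s * sin t) * cos t) + ∫ t in 0..π, sin (s * sin t) * sin t := by
    rw [← integral_add]
    · exact integral_congr fun t _ => by simp only [cos_sub]; ring
    all_goals apply Continuous.intervalIntegrable; fun_prop
  rw [J1, hsplit, hodd, zero_add, ← mul_assoc, mul_one_div_cancel pi_ne_zero, one_mul]

theorem integral_sin_mul_sin_sin_eq_two_pi_mul_J1 (s : ℝ) :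
    ∫ t in 0..2 * π, sin (s * sin t) * sin t = 2 * π * J1 s := by
  have hper : Function.Periodic (fun t => sin (s * sin t) * sin t) π := fun t => by
    simp only [sin_add_pi, mul_neg, sin_neg, neg_mul, neg_neg]
  have h := hper.intervalIntegral_add_zsmul_eq 2 0
    fun _ _ => (by fun_prop : Continuous _).intervalIntegrable _ _
  simp only [zero_add, zsmul_eq_mul, Int.cast_ofNat] at h
  rw [h, integral_sin_mul_sin_sin_eq_pi_mul_J1, mul_assoc]

theorem integral_sin_mul_sin_add_mul_cos (s φ : ℝ) :
    ∫ τ in 0..2 * π, sin (s * sin (τ + φ)) * cos τ = 2 * π * sin φ * J1 s := by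
  set g : ℝ → ℝ := fun u => sin (s * sin u) * cos (u - φ)
  have hper : Function.Periodic g (2 * π) := fun u => by
    simp only [g, sin_add_two_pi, add_sub_right_comm, cos_add_two_pi]
  have hshift : ∫ τ in 0..2 * π, sin (s * sin (τ + φ)) * cos τ = ∫ u in 0..2 * π, g u := by
    have hg : ∀ τ, sin (s * sin (τ + φ)) * cos τ = g (τ + φ) := fun τ => by
      simp only [g, add_sub_cancel_right]
    rw [integral_congr fun τ _ => hg τ, integral_comp_add_right g φ, zero_add, add_comm _ φ,
      hper.intervalIntegral_add_eq φ 0, zero_add]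
  have hodd : ∫ u in 0..2 * π, sin (s * sin u) * cos u = 0 :=
    Function.Periodic.integral_eq_zero_of_reflect_eq_neg (c := π)
      (fun u => by simp only [sin_add_two_pi, cos_add_two_pi])
      fun u => by rw [sin_pi_sub, cos_pi_sub, mul_neg]
  have hsplit : ∫ u in 0..2 * π, g u
      = cos φ * (∫ u in 0..2 * π, sin (s * sin u) * cos u)
        + sin φ * ∫ u in 0..2 * π, sin (s * sin u) * sin u := by
    rw [← integral_const_mul, ← integral_const_mul, ← integral_add]
    · congr 1 with u
      simp only [g, cos_sub]
      ring
    all_goals apply Continuous.intervalIntegrable; fun_prop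
  rw [hshift, hsplit, hodd, integral_sin_mul_sin_sin_eq_two_pi_mul_J1]
  ring

theorem integral_cos_mul_sin_mul_cos_mul_cos_mul_cos_eq_zero (a : ℝ) :
    ∫ τ in 0..2 * π, cos (a * sin τ) * cos (a * cos τ) * cos τ = 0 :=
  Function.Periodic.integral_eq_zero_of_reflect_eq_neg (c := π)
    (fun τ => by simp only [sin_add_two_pi, cos_add_two_pi])
    fun τ => by simp only [sin_pi_sub, cos_pi_sub, mul_neg, cos_neg]

theorem integral_cos_mul_sin_mul_sin_mul_cos_mul_cos_eq (a : ℝ) :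
    ∫ τ in 0..2 * π, cos (a * sin τ) * sin (a * cos τ) * cos τ = √2 * π * J1 (√2 * a) := by
  have hpt : ∀ τ, cos (a * sin τ) * sin (a * cos τ) * cos τ
      = 1 / 2 * (sin (√2 * a * sin (τ + π / 4)) * cos τ)
        + 1 / 2 * (sin (√2 * a * sin (τ + 3 * π / 4)) * cos τ) := fun τ => by
    rw [mul_comm √2 a, mul_assoc a √2, mul_assoc a √2, sqrt_two_mul_sin_add_pi_div_four,
      sqrt_two_mul_sin_add_three_pi_div_four, mul_add, mul_sub, sin_add, sin_sub]
    ring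
  rw [integral_congr fun τ _ => hpt τ, integral_add]
  · rw [integral_const_mul, integral_const_mul, integral_sin_mul_sin_add_mul_cos,
      integral_sin_mul_sin_add_mul_cos, show 3 * π / 4 = π - π / 4 by ring, sin_pi_sub,
      sin_pi_div_four]
    ring
  all_goals apply Continuous.intervalIntegrable; fun_prop

theorem xi_c_demodulation_averages_inplane (a θtilde : ℝ) :
    let ξc : ℝ → ℝ := fun τ =>
      Real.cos ((0:ℝ) + a * Real.sin τ) * Real.cos (0:ℝ) *
          Real.cos (θtilde + a * Real.cos τ) +
        Real.sin ((0:ℝ) + a * Real.sin τ) * Real.sin (0:ℝ)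
    ((1 / (2 * π)) * ∫ τ in (0:ℝ)..(2 * π), ξc τ * Real.sin τ) = 0 ∧
    ((1 / (2 * π)) * ∫ τ in (0:ℝ)..(2 * π), ξc τ * Real.cos τ)
      = -(J1 (Real.sqrt 2 * a) / Real.sqrt 2) * Real.sin θtilde := by
  intro ξc
  have hξc : ∀ τ, ξc τ = cos (a * sin τ) * cos (θtilde + a * cos τ) := fun τ => by simp [ξc]
  constructor
  · have hper : Function.Periodic (fun τ => ξc τ * sin τ) (2 * π) := fun τ => by
      simp only [hξc, sin_add_two_pi, cos_add_two_pi]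
    rw [hper.integral_eq_zero_of_reflect_eq_neg (c := 0) fun τ => by
      simp only [hξc, zero_sub, sin_neg, cos_neg, mul_neg], mul_zero]
  · have hsplit : ∫ τ in 0..2 * π, ξc τ * cos τ
        = cos θtilde * (∫ τ in 0..2 * π, cos (a * sin τ) * cos (a * cos τ) * cos τ)
          - sin θtilde * ∫ τ in 0..2 * π, cos (a * sin τ) * sin (a * cos τ) * cos τ := by
      rw [← integral_const_mul, ← integral_const_mul, ← integral_sub]
      · exact integral_congr fun τ _ => by simp only [hξc, cos_add]; ring
      all_goals apply Continuous.intervalIntegrable; fun_prop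
    rw [hsplit, integral_cos_mul_sin_mul_cos_mul_cos_mul_cos_eq_zero,
      integral_cos_mul_sin_mul_sin_mul_cos_mul_cos_eq]
    have hsqrt : √2 * √2 = 2 := mul_self_sqrt zero_le_two
    field_simp
    linear_combination -(π * sin θtilde * J1 (√2 * a)) * hsqrt
end

section
/- For all a in the interval [1.25, 1.65]: J0(√2 a) > 0, J1(√2 a) > 0, and ρ1 := 2J0²(√2 a) − (1/2)[J0(2√2 a) + J0(2a) + 1] < 0. -/
open Real

/-- Bessel function of the first kind of order 0 (integral representation). -/
noncomputable def J0 (x : ℝ) : ℝ := (1 / π) * ∫ t in (0:ℝ)..π, Real.cos (x * Real.sin t)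

/-! Integrating the alternating Taylor bounds for `cos` and `sin` along `x * sin t` squeezes
`J0 x` between consecutive partial sums of `∑ (-x² / 4) ^ k / k!²` and bounds `J1 x`,
for `x ≥ 0`, from below by partial sums of `∑ (-1) ^ k (x / 2) ^ (2k + 1) / (k! (k + 1)!)`; the
`cos t * cos (x sin t)` part of the integrand of `J1` integrates to zero by the symmetry
`t ↦ π - t`. With `u = a² / 2` the three claims become polynomial inequalities on
`u ∈ [25/32, 1089/800]`. The upper bound on `J0 (√2 a)` may be squared because `J0 (√2 a)` was
shown positive first. -/

open Finset Nat

noncomputable def cosTaylor (n : ℕ) (y : ℝ) : ℝ :=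
  ∑ k ∈ range n, (-1) ^ k * y ^ (2 * k) / (2 * k)!

noncomputable def sinTaylor (n : ℕ) (y : ℝ) : ℝ :=
  ∑ k ∈ range n, (-1) ^ k * y ^ (2 * k + 1) / (2 * k + 1)!

@[fun_prop]
theorem continuous_cosTaylor (n : ℕ) : Continuous (cosTaylor n) := by
  unfold cosTaylor; fun_prop

@[fun_prop]
theorem continuous_sinTaylor (n : ℕ) : Continuous (sinTaylor n) := by
  unfold sinTaylor; fun_prop

theorem hasDerivAt_sinTaylor (n : ℕ) (y : ℝ) : HasDerivAt (sinTaylor n) (cosTaylor n y) y := by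
  refine HasDerivAt.fun_sum fun k _ => ?_
  refine (((hasDerivAt_pow (2 * k + 1) y).const_mul ((-1 : ℝ) ^ k)).div_const
    ((2 * k + 1)! : ℝ)).congr_deriv ?_
  rw [Nat.add_sub_cancel, Nat.factorial_succ]
  push_cast
  field_simp

theorem hasDerivAt_cosTaylor_succ (n : ℕ) (y : ℝ) :
    HasDerivAt (cosTaylor (n + 1)) (-sinTaylor n y) y := by
  have hshift : cosTaylor (n + 1) = fun z => (∑ k ∈ range n,
      (-1 : ℝ) ^ (k + 1) * z ^ (2 * k + 2) / (2 * k + 2)!) + 1 := by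
    funext z
    simp [cosTaylor, sum_range_succ', mul_add]
  rw [hshift, sinTaylor, ← sum_neg_distrib]
  refine (HasDerivAt.fun_sum fun k _ => ?_).add_const 1
  refine (((hasDerivAt_pow (2 * k + 2) y).const_mul ((-1 : ℝ) ^ (k + 1))).div_const
    ((2 * k + 2)! : ℝ)).congr_deriv ?_
  rw [show 2 * k + 2 - 1 = 2 * k + 1 by omega, Nat.factorial_succ (2 * k + 1)]
  push_cast
  field_simp
  ring

theorem sinTaylor_apply_zero (n : ℕ) : sinTaylor n 0 = 0 := by
  simp [sinTaylor]

theorem cosTaylor_succ_apply_zero (n : ℕ) : cosTaylor (n + 1) 0 = 1 := by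
  simp [cosTaylor, sum_range_succ']

theorem cosTaylor_abs (n : ℕ) (y : ℝ) : cosTaylor n |y| = cosTaylor n y := by
  simp [cosTaylor, pow_mul]

theorem le_of_hasDerivAt_le {f g f' g' : ℝ → ℝ} (hf : ∀ y, HasDerivAt f (f' y) y)
    (hg : ∀ y, HasDerivAt g (g' y) y) (h0 : f 0 ≤ g 0) (hd : ∀ y, 0 ≤ y → f' y ≤ g' y)
    {y : ℝ} (hy : 0 ≤ y) : f y ≤ g y :=
  image_le_of_deriv_right_le_deriv_boundary (fun z _ => (hf z).continuousAt.continuousWithinAt)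
    (fun z _ => (hf z).hasDerivWithinAt) h0
    (fun z _ => (hg z).continuousAt.continuousWithinAt) (fun z _ => (hg z).hasDerivWithinAt)
    (fun z hz => hd z hz.1) ⟨hy, le_rfl⟩

section TaylorBounds

variable {n : ℕ}

theorem sin_le_sinTaylor_of_cos_le (h : ∀ y, 0 ≤ y → cos y ≤ cosTaylor n y) {y : ℝ}
    (hy : 0 ≤ y) : sin y ≤ sinTaylor n y :=
  le_of_hasDerivAt_le hasDerivAt_sin (hasDerivAt_sinTaylor n) (by simp [sinTaylor_apply_zero])
    h hy

theorem sinTaylor_le_sin_of_cosTaylor_le (h : ∀ y, 0 ≤ y → cosTaylor n y ≤ cos y) {y : ℝ}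
    (hy : 0 ≤ y) : sinTaylor n y ≤ sin y :=
  le_of_hasDerivAt_le (hasDerivAt_sinTaylor n) hasDerivAt_sin (by simp [sinTaylor_apply_zero])
    h hy

theorem cosTaylor_succ_le_cos_of_sin_le (h : ∀ y, 0 ≤ y → sin y ≤ sinTaylor n y) {y : ℝ}
    (hy : 0 ≤ y) : cosTaylor (n + 1) y ≤ cos y :=
  le_of_hasDerivAt_le (hasDerivAt_cosTaylor_succ n) hasDerivAt_cos
    (by simp [cosTaylor_succ_apply_zero]) (fun z hz => neg_le_neg (h z hz)) hy

theorem cos_le_cosTaylor_succ_of_sinTaylor_le (h : ∀ y, 0 ≤ y → sinTaylor n y ≤ sin y)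
    {y : ℝ} (hy : 0 ≤ y) : cos y ≤ cosTaylor (n + 1) y :=
  le_of_hasDerivAt_le hasDerivAt_cos (hasDerivAt_cosTaylor_succ n)
    (by simp [cosTaylor_succ_apply_zero]) (fun z hz => neg_le_neg (h z hz)) hy

end TaylorBounds

theorem cosTaylor_bounds_of_nonneg (m : ℕ) :
    (∀ y, 0 ≤ y → cos y ≤ cosTaylor (2 * m + 1) y) ∧
      ∀ y, 0 ≤ y → cosTaylor (2 * m + 2) y ≤ cos y := by
  induction m with
  | zero =>
    have hupper : ∀ y, 0 ≤ y → cos y ≤ cosTaylor 1 y := fun y _ => by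
      simpa [cosTaylor] using cos_le_one y
    exact ⟨hupper, fun y =>
      cosTaylor_succ_le_cos_of_sin_le fun z => sin_le_sinTaylor_of_cos_le hupper⟩
  | succ m ih =>
    have hupper : ∀ y, 0 ≤ y → cos y ≤ cosTaylor (2 * (m + 1) + 1) y := fun y =>
      cos_le_cosTaylor_succ_of_sinTaylor_le (fun z => sinTaylor_le_sin_of_cosTaylor_le ih.2)
    exact ⟨hupper, fun y =>
      cosTaylor_succ_le_cos_of_sin_le fun z => sin_le_sinTaylor_of_cos_le hupper⟩

theorem cos_le_cosTaylor (m : ℕ) (y : ℝ) : cos y ≤ cosTaylor (2 * m + 1) y := by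
  rw [← cos_abs, ← cosTaylor_abs]
  exact (cosTaylor_bounds_of_nonneg m).1 _ (abs_nonneg y)

theorem cosTaylor_le_cos (m : ℕ) (y : ℝ) : cosTaylor (2 * m + 2) y ≤ cos y := by
  rw [← cos_abs, ← cosTaylor_abs]
  exact (cosTaylor_bounds_of_nonneg m).2 _ (abs_nonneg y)

theorem sinTaylor_le_sin (m : ℕ) {y : ℝ} (hy : 0 ≤ y) : sinTaylor (2 * m + 2) y ≤ sin y :=
  sinTaylor_le_sin_of_cosTaylor_le (cosTaylor_bounds_of_nonneg m).2 hy

theorem prod_range_odd_div_even (k : ℕ) :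
    ∏ i ∈ range k, (2 * (i : ℝ) + 1) / (2 * i + 2) =
      (2 * k)! / (4 ^ k * (k ! : ℝ) ^ 2) := by
  induction k with
  | zero => simp
  | succ k ih =>
    rw [prod_range_succ, ih, show 2 * (k + 1) = 2 * k + 1 + 1 by ring, Nat.factorial_succ,
      Nat.factorial_succ, Nat.factorial_succ]
    push_cast
    field_simp
    ring

theorem integral_sin_pow_two_mul (k : ℕ) :
    ∫ t in 0..π, sin t ^ (2 * k) = π * (2 * k)! / (4 ^ k * (k ! : ℝ) ^ 2) := by
  rw [integral_sin_pow_even, prod_range_odd_div_even, mul_div_assoc]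

theorem integral_cos_mul_comp_sin (f : ℝ → ℝ) : ∫ t in 0..π, cos t * f (sin t) = 0 := by
  have h := intervalIntegral.integral_comp_sub_left (fun t => cos t * f (sin t))
    (a := 0) (b := π) π
  simp only [cos_pi_sub, sin_pi_sub, neg_mul, intervalIntegral.integral_neg, sub_self,
    sub_zero] at h
  linarith

noncomputable def besselJ0Partial (n : ℕ) (u : ℝ) : ℝ :=
  ∑ k ∈ range n, (-u) ^ k / (k ! : ℝ) ^ 2

noncomputable def besselJ1Partial (n : ℕ) (x : ℝ) : ℝ :=
  ∑ k ∈ range n, (-1) ^ k * (x / 2) ^ (2 * k + 1) / (k ! * (k + 1)! : ℝ)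

theorem integral_cosTaylor_comp_mul_sin (n : ℕ) (x : ℝ) :
    ∫ t in 0..π, cosTaylor n (x * sin t) = π * besselJ0Partial n (x ^ 2 / 4) := by
  simp only [cosTaylor, besselJ0Partial, mul_sum]
  rw [intervalIntegral.integral_finsetSum fun k _ => by
    apply Continuous.intervalIntegrable; fun_prop]
  refine sum_congr rfl fun k _ => ?_
  simp only [mul_pow, mul_div_right_comm _ _ ((2 * k)! : ℝ), ← mul_assoc]
  rw [intervalIntegral.integral_const_mul, integral_sin_pow_two_mul, neg_pow (x ^ 2 / 4), div_pow,
    ← pow_mul]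
  field_simp

theorem integral_sin_mul_sinTaylor_comp_mul_sin (n : ℕ) (x : ℝ) :
    ∫ t in 0..π, sin t * sinTaylor n (x * sin t) = π * besselJ1Partial n x := by
  simp only [sinTaylor, besselJ1Partial, mul_sum]
  rw [intervalIntegral.integral_finsetSum fun k _ => by
    apply Continuous.intervalIntegrable; fun_prop]
  refine sum_congr rfl fun k _ => ?_
  have hpow : ∀ t, sin t * ((-1) ^ k * (x * sin t) ^ (2 * k + 1) / (2 * k + 1)!) =
      (-1) ^ k * x ^ (2 * k + 1) / (2 * k + 1)! * sin t ^ (2 * (k + 1)) := fun t => by ring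
  simp only [hpow]
  rw [intervalIntegral.integral_const_mul, integral_sin_pow_two_mul,
    show 2 * (k + 1) = 2 * k + 1 + 1 by ring, Nat.factorial_succ (2 * k + 1), Nat.factorial_succ k,
    div_pow x 2, pow_succ 4, show (4 : ℝ) ^ k = 2 ^ (2 * k) by rw [pow_mul]; norm_num]
  push_cast
  field_simp
  ring

theorem pi_mul_J0 (x : ℝ) : π * J0 x = ∫ t in 0..π, cos (x * sin t) := by
  rw [J0, ← mul_assoc, mul_one_div_cancel pi_ne_zero, one_mul]

theorem pi_mul_J1 (x : ℝ) : π * J1 x = ∫ t in 0..π, sin t * sin (x * sin t) := by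
  have hsplit : ∫ t in 0..π, cos (t - x * sin t) =
      (∫ t in 0..π, cos t * cos (x * sin t)) + ∫ t in 0..π, sin t * sin (x * sin t) := by
    simp only [cos_sub]
    exact intervalIntegral.integral_add (by apply Continuous.intervalIntegrable; fun_prop)
      (by apply Continuous.intervalIntegrable; fun_prop)
  rw [J1, ← mul_assoc, mul_one_div_cancel pi_ne_zero, one_mul, hsplit,
    integral_cos_mul_comp_sin fun s => cos (x * s), zero_add]

theorem besselJ0Partial_le_J0 (m : ℕ) (x : ℝ) :
    besselJ0Partial (2 * m + 2) (x ^ 2 / 4) ≤ J0 x := by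
  refine le_of_mul_le_mul_left ?_ pi_pos
  rw [pi_mul_J0, ← integral_cosTaylor_comp_mul_sin]
  refine intervalIntegral.integral_mono_on pi_pos.le
    (by apply Continuous.intervalIntegrable; fun_prop)
    (by apply Continuous.intervalIntegrable; fun_prop) fun t _ => cosTaylor_le_cos m _

theorem J0_le_besselJ0Partial (m : ℕ) (x : ℝ) :
    J0 x ≤ besselJ0Partial (2 * m + 1) (x ^ 2 / 4) := by
  refine le_of_mul_le_mul_left ?_ pi_pos
  rw [pi_mul_J0, ← integral_cosTaylor_comp_mul_sin]
  refine intervalIntegral.integral_mono_on pi_pos.le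
    (by apply Continuous.intervalIntegrable; fun_prop)
    (by apply Continuous.intervalIntegrable; fun_prop) fun t _ => cos_le_cosTaylor m _

theorem besselJ1Partial_le_J1 (m : ℕ) {x : ℝ} (hx : 0 ≤ x) :
    besselJ1Partial (2 * m + 2) x ≤ J1 x := by
  refine le_of_mul_le_mul_left ?_ pi_pos
  rw [pi_mul_J1, ← integral_sin_mul_sinTaylor_comp_mul_sin]
  refine intervalIntegral.integral_mono_on pi_pos.le
    (by apply Continuous.intervalIntegrable; fun_prop)
    (by apply Continuous.intervalIntegrable; fun_prop) fun t ht => ?_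
  have hsin : 0 ≤ sin t := sin_nonneg_of_nonneg_of_le_pi ht.1 ht.2
  exact mul_le_mul_of_nonneg_left (sinTaylor_le_sin m (mul_nonneg hx hsin)) hsin

theorem besselJ0Partial_four_pos {u : ℝ} (h0 : 0 ≤ u) (h1 : u ≤ 1089 / 800) :
    0 < besselJ0Partial 4 u := by
  simp only [besselJ0Partial, sum_range_succ, sum_range_zero]
  norm_num [Nat.factorial]
  nlinarith [mul_nonneg h0 (sub_nonneg.2 h1)]

theorem besselJ1Partial_two_pos {x : ℝ} (h0 : 0 < x) (h1 : x ^ 2 < 8) :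
    0 < besselJ1Partial 2 x := by
  simp only [besselJ1Partial, sum_range_succ, sum_range_zero]
  norm_num [Nat.factorial]
  nlinarith

theorem rho_of_besselJ0Partial_neg {u : ℝ} (h0 : 25 / 32 ≤ u) (h1 : u ≤ 1089 / 800) :
    2 * besselJ0Partial 3 u ^ 2 -
      1 / 2 * (besselJ0Partial 6 (4 * u) + besselJ0Partial 4 (2 * u) + 1) < 0 := by
  simp only [besselJ0Partial, sum_range_succ, sum_range_zero]
  norm_num [Nat.factorial]
  have h := mul_nonneg (sub_nonneg.2 h0) (sub_nonneg.2 h1)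
  nlinarith [mul_nonneg h (sub_nonneg.2 h0), mul_nonneg h (sub_nonneg.2 h1)]

theorem bessel_signs_Sa1 :
    ∀ a ∈ Set.Icc (1.25 : ℝ) 1.65,
      0 < J0 (Real.sqrt 2 * a) ∧
      0 < J1 (Real.sqrt 2 * a) ∧
      2 * (J0 (Real.sqrt 2 * a))^2 -
        (1/2) * (J0 (2 * Real.sqrt 2 * a) + J0 (2 * a) + 1) < 0 := by
  rintro a ⟨ha₁, ha₂⟩
  norm_num at ha₁ ha₂
  have hsq : √2 ^ 2 = 2 := sq_sqrt zero_le_two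
  have hx : (√2 * a) ^ 2 / 4 = a ^ 2 / 2 := by rw [mul_pow, hsq]; ring
  have h2x : (2 * √2 * a) ^ 2 / 4 = 4 * (a ^ 2 / 2) := by rw [mul_pow, mul_pow, hsq]; ring
  have h2a : (2 * a) ^ 2 / 4 = 2 * (a ^ 2 / 2) := by ring
  have hu₁ : 25 / 32 ≤ a ^ 2 / 2 := by nlinarith
  have hu₂ : a ^ 2 / 2 ≤ 1089 / 800 := by nlinarith
  have hJ0 : 0 < J0 (√2 * a) :=
    (besselJ0Partial_four_pos (by linarith) hu₂).trans_le (hx ▸ besselJ0Partial_le_J0 1 _)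
  refine ⟨hJ0, ?_, ?_⟩
  · have hx0 : 0 < √2 * a := by positivity
    exact (besselJ1Partial_two_pos hx0 (by nlinarith)).trans_le (besselJ1Partial_le_J1 0 hx0.le)
  · have hJ0_sq : J0 (√2 * a) ^ 2 ≤ besselJ0Partial 3 (a ^ 2 / 2) ^ 2 :=
      pow_le_pow_left₀ hJ0.le (hx ▸ J0_le_besselJ0Partial 1 _) 2
    have hJ0_2x := h2x ▸ besselJ0Partial_le_J0 2 (2 * √2 * a)
    have hJ0_2a := h2a ▸ besselJ0Partial_le_J0 1 (2 * a)
    linarith [rho_of_besselJ0Partial_neg hu₁ hu₂]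
end
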